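/- arXiv:2103.01323 — 2 statements merged into one kernel-verified Lean document; each statement's English description precedes it below -/
import Mathlib

section
/- Let d ≥ 1 and α ∈ (0,2). For β with 2β < α, there exists a constant C > 0 such that for all t ∈ (0,1], ∫_{ℝ^d} (|z|^{2β} ∧ 1) · t (t^{1/α} + |z|)^{-d-α} dz ≤ C t^{2β/α}. -/
open MeasureTheory

lemma aux_scale (d : ℕ) (γ s : ℝ) (hs : 0 < s) :
    ∫ z : EuclideanSpace ℝ (Fin d), (s + ‖z‖) ^ (-γ)
      = s ^ (-γ) * (s ^ d * ∫ z : EuclideanSpace ℝ (Fin d), (1 + ‖z‖) ^ (-γ)) := by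
  have h : ∀ z : EuclideanSpace ℝ (Fin d),
      (s + ‖z‖) ^ (-γ) = s ^ (-γ) * (1 + ‖s⁻¹ • z‖) ^ (-γ) := by
    intro z
    rw [norm_smul, Real.norm_eq_abs, abs_of_pos (inv_pos.2 hs)]
    have h1 : 1 + s⁻¹ * ‖z‖ = s⁻¹ * (s + ‖z‖) := by field_simp
    rw [h1, Real.mul_rpow (inv_nonneg.2 hs.le) (by positivity),
      Real.inv_rpow hs.le, ← Real.rpow_neg hs.le, neg_neg,
      ← mul_assoc, ← Real.rpow_add hs]
    simp
  simp_rw [h]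
  rw [integral_const_mul,
    Measure.integral_comp_inv_smul_of_nonneg volume
      (fun z : EuclideanSpace ℝ (Fin d) => (1 + ‖z‖) ^ (-γ)) hs.le,
    finrank_euclideanSpace_fin, smul_eq_mul]

lemma aux_integrable (d : ℕ) (γ s : ℝ) (hγ : (d : ℝ) < γ) (hs : 0 < s) :
    Integrable (fun z : EuclideanSpace ℝ (Fin d) => (s + ‖z‖) ^ (-γ)) := by
  have h : ∀ z : EuclideanSpace ℝ (Fin d),
      (s + ‖z‖) ^ (-γ) = s ^ (-γ) * (1 + ‖s⁻¹ • z‖) ^ (-γ) := by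
    intro z
    rw [norm_smul, Real.norm_eq_abs, abs_of_pos (inv_pos.2 hs)]
    have h1 : 1 + s⁻¹ * ‖z‖ = s⁻¹ * (s + ‖z‖) := by field_simp
    rw [h1, Real.mul_rpow (inv_nonneg.2 hs.le) (by positivity),
      Real.inv_rpow hs.le, ← Real.rpow_neg hs.le, neg_neg,
      ← mul_assoc, ← Real.rpow_add hs]
    simp
  have hbase : Integrable (fun z : EuclideanSpace ℝ (Fin d) => (1 + ‖z‖) ^ (-γ)) := by
    apply integrable_one_add_norm
    rwa [finrank_euclideanSpace_fin]
  have := (hbase.comp_smul (inv_ne_zero hs.ne')).const_mul (s ^ (-γ))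
  exact this.congr (Filter.Eventually.of_forall fun z => (h z).symm)

theorem stmt_3 (d : ℕ) (hd : 1 ≤ d) (α β : ℝ) (hα : 0 < α) (hα2 : α < 2)
    (hβ : 2 * β < α) :
    ∃ C > 0, ∀ t : ℝ, 0 < t → t ≤ 1 →
      ∫ z : EuclideanSpace ℝ (Fin d),
          (min (‖z‖ ^ (2 * β)) 1) * (t * (t ^ (1 / α) + ‖z‖) ^ (-(d : ℝ) - α))
        ≤ C * t ^ (2 * β / α) := by
  set β' : ℝ := max β 0 with hβ'
  set γ : ℝ := (d : ℝ) + α - 2 * β' with hγdef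
  have hβ'α : 2 * β' < α := by
    rcases le_or_gt β 0 with h | h
    · simp [hβ', max_eq_right h]; linarith
    · rw [hβ', max_eq_left h.le]; exact hβ
  have hγ : (d : ℝ) < γ := by rw [hγdef]; linarith
  set I : ℝ := ∫ z : EuclideanSpace ℝ (Fin d), (1 + ‖z‖) ^ (-γ) with hI
  have hI0 : 0 ≤ I := integral_nonneg fun z => Real.rpow_nonneg (by positivity) _
  refine ⟨I + 1, by linarith, fun t ht ht1 => ?_⟩
  set s : ℝ := t ^ (1 / α) with hsdef
  have hs : 0 < s := Real.rpow_pos_of_pos ht _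
  have hs1 : s ≤ 1 := Real.rpow_le_one ht.le ht1 (by positivity)
  have hts : s ^ α = t := by
    rw [hsdef, ← Real.rpow_mul ht.le, one_div, inv_mul_cancel₀ hα.ne', Real.rpow_one]
  -- pointwise bound
  have hpt : ∀ z : EuclideanSpace ℝ (Fin d),
      (min (‖z‖ ^ (2 * β)) 1) * (t * (s + ‖z‖) ^ (-(d : ℝ) - α))
        ≤ t * (s + ‖z‖) ^ (-γ) := by
    intro z
    have hsz : 0 < s + ‖z‖ := by positivity
    have hmin : min (‖z‖ ^ (2 * β)) 1 ≤ (s + ‖z‖) ^ (2 * β') := by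
      rcases le_or_gt β 0 with h | h
      · have : β' = 0 := max_eq_right h
        rw [this, mul_zero, Real.rpow_zero]
        exact min_le_right _ _
      · have hb : β' = β := max_eq_left h.le
        rw [hb]
        refine le_trans (min_le_left _ _) ?_
        exact Real.rpow_le_rpow (norm_nonneg z) (by linarith [norm_nonneg z]) (by positivity)
    calc (min (‖z‖ ^ (2 * β)) 1) * (t * (s + ‖z‖) ^ (-(d : ℝ) - α))
        ≤ (s + ‖z‖) ^ (2 * β') * (t * (s + ‖z‖) ^ (-(d : ℝ) - α)) := by
          apply mul_le_mul_of_nonneg_right hmin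
          positivity
      _ = t * (s + ‖z‖) ^ (-γ) := by
          rw [mul_comm, mul_assoc, ← Real.rpow_add hsz]
          congr 2
          rw [hγdef]; ring
  have hintg : Integrable (fun z : EuclideanSpace ℝ (Fin d) => t * (s + ‖z‖) ^ (-γ)) :=
    (aux_integrable d γ s hγ hs).const_mul t
  have hmono := integral_mono_of_nonneg
    (f := fun z : EuclideanSpace ℝ (Fin d) =>
      (min (‖z‖ ^ (2 * β)) 1) * (t * (s + ‖z‖) ^ (-(d : ℝ) - α)))
    (g := fun z : EuclideanSpace ℝ (Fin d) => t * (s + ‖z‖) ^ (-γ))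
    (Filter.Eventually.of_forall fun z => by
      have : (0:ℝ) ≤ min (‖z‖ ^ (2 * β)) 1 := le_min (Real.rpow_nonneg (norm_nonneg z) _) one_pos.le
      positivity)
    hintg (Filter.Eventually.of_forall hpt)
  refine le_trans hmono ?_
  rw [integral_const_mul, aux_scale d γ s hs, ← hI]
  have hval : t * (s ^ (-γ) * (s ^ (d : ℕ) * I)) = s ^ (2 * β') * I := by
    rw [← hts, ← Real.rpow_natCast s d]
    rw [show s ^ α * (s ^ (-γ) * (s ^ ((d : ℕ) : ℝ) * I))
        = s ^ α * s ^ (-γ) * s ^ ((d : ℕ) : ℝ) * I from by ring]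
    rw [← Real.rpow_add hs, ← Real.rpow_add hs]
    congr 2
    rw [hγdef]; ring
  rw [hval]
  have h1 : s ^ (2 * β') ≤ s ^ (2 * β) :=
    Real.rpow_le_rpow_of_exponent_ge hs hs1 (by have := le_max_left β (0:ℝ); rw [hβ']; linarith)
  have h2 : t ^ (2 * β / α) = s ^ (2 * β) := by
    rw [hsdef, ← Real.rpow_mul ht.le]
    congr 1
    field_simp
  rw [h2]
  have hspos : 0 < s ^ (2 * β) := Real.rpow_pos_of_pos hs _
  nlinarith [mul_le_mul_of_nonneg_right h1 hI0]
end

section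
/- (FKG-type inequality for subordinated Gaussian kernels) Let η be a probability density on (0,∞) with ∫₀^∞ (2πs)^{-d/2} e^{r/(2s)} η(s) ds < ∞ for all r ≥ 0. Then for any x, M ∈ ℝ^d, ∫₀^∞ (2πs)^{-d/2} e^{-|x+M|²/(2s)} η(s) ds ≤ (∫₀^∞ (2πs)^{-d/2} e^{-|x|²/(4s)} η(s) ds) · (∫₀^∞ (2πs)^{-d/2} e^{|M|²/(2s)} η(s) ds) / (∫₀^∞ (2πs)^{-d/2} η(s) ds). -/
open MeasureTheory Real Set


lemma cheb_aux (μ : Measure ℝ) [SigmaFinite μ] (w g h : ℝ → ℝ)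
    (hw : Integrable w μ) (hwg : Integrable (fun s => w s * g s) μ)
    (hwh : Integrable (fun s => w s * h s) μ)
    (hwgh : Integrable (fun s => w s * g s * h s) μ)
    (hsign : ∀ᵐ p ∂(μ.prod μ), w p.1 * w p.2 * (g p.1 - g p.2) * (h p.1 - h p.2) ≤ 0) :
    (∫ s, w s * g s * h s ∂μ) * (∫ s, w s ∂μ)
      ≤ (∫ s, w s * g s ∂μ) * (∫ s, w s * h s ∂μ) := by
  have h1 := hwgh.mul_prod hw
  have h2 := hwg.mul_prod hwh
  have h3 := hwh.mul_prod hwg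
  have h4 := hw.mul_prod hwgh
  have e : ∫ p : ℝ × ℝ, (w p.1 * w p.2 * (g p.1 - g p.2) * (h p.1 - h p.2)) ∂(μ.prod μ)
      = (∫ s, w s * g s * h s ∂μ) * (∫ s, w s ∂μ)
        - (∫ s, w s * g s ∂μ) * (∫ s, w s * h s ∂μ)
        - (∫ s, w s * h s ∂μ) * (∫ s, w s * g s ∂μ)
        + (∫ s, w s ∂μ) * (∫ s, w s * g s * h s ∂μ) := by
    have h234 : Integrable (fun z : ℝ × ℝ => w z.1 * g z.1 * (w z.2 * h z.2)
        + (w z.1 * h z.1 * (w z.2 * g z.2) - w z.1 * (w z.2 * g z.2 * h z.2))) (μ.prod μ) := by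
      have := h2.add (h3.sub h4)
      simpa [Pi.add_def, Pi.sub_def] using this
    have h34 : Integrable (fun z : ℝ × ℝ => w z.1 * h z.1 * (w z.2 * g z.2)
        - w z.1 * (w z.2 * g z.2 * h z.2)) (μ.prod μ) := by
      simpa [Pi.sub_def] using h3.sub h4
    calc ∫ p : ℝ × ℝ, (w p.1 * w p.2 * (g p.1 - g p.2) * (h p.1 - h p.2)) ∂(μ.prod μ)
        = ∫ p : ℝ × ℝ, ((w p.1 * g p.1 * h p.1) * w p.2 - ((w p.1 * g p.1) * (w p.2 * h p.2)
            + ((w p.1 * h p.1) * (w p.2 * g p.2) - w p.1 * (w p.2 * g p.2 * h p.2)))) ∂(μ.prod μ) :=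
          integral_congr_ae (Filter.Eventually.of_forall fun p => by ring)
      _ = _ := by
          rw [integral_sub h1 h234, integral_add h2 h34,
            integral_sub h3 h4,
            integral_prod_mul (μ := μ) (ν := μ) (fun s => w s * g s * h s) w,
            integral_prod_mul (μ := μ) (ν := μ) (fun s => w s * g s) (fun s => w s * h s),
            integral_prod_mul (μ := μ) (ν := μ) (fun s => w s * h s) (fun s => w s * g s),
            integral_prod_mul (μ := μ) (ν := μ) w (fun s => w s * g s * h s)]
          ring
  have hle : ∫ p : ℝ × ℝ, (w p.1 * w p.2 * (g p.1 - g p.2) * (h p.1 - h p.2)) ∂(μ.prod μ) ≤ 0 :=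
    integral_nonpos_of_ae hsign
  rw [e] at hle
  linarith


theorem stmt_5 (d : ℕ) (hd : 1 ≤ d) (η : ℝ → ℝ)
    (hη_nonneg : ∀ s, 0 ≤ η s)
    (hη_prob : ∫ s in Ioi (0 : ℝ), η s = 1)
    (hint : ∀ r : ℝ, 0 ≤ r →
      IntegrableOn (fun s => (2 * π * s) ^ (-(d : ℝ) / 2) * Real.exp (r / (2 * s)) * η s)
        (Ioi 0))
    (x M : EuclideanSpace ℝ (Fin d)) :
    ∫ s in Ioi (0 : ℝ), (2 * π * s) ^ (-(d : ℝ) / 2) * Real.exp (-‖x + M‖ ^ 2 / (2 * s)) * η s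
      ≤ (∫ s in Ioi (0 : ℝ), (2 * π * s) ^ (-(d : ℝ) / 2) * Real.exp (-‖x‖ ^ 2 / (4 * s)) * η s)
        * (∫ s in Ioi (0 : ℝ), (2 * π * s) ^ (-(d : ℝ) / 2) * Real.exp (‖M‖ ^ 2 / (2 * s)) * η s)
        / (∫ s in Ioi (0 : ℝ), (2 * π * s) ^ (-(d : ℝ) / 2) * η s) := by
  set w : ℝ → ℝ := fun s => (2 * π * s) ^ (-(d : ℝ) / 2) * η s with hw_def
  set g : ℝ → ℝ := fun s => Real.exp (-‖x‖ ^ 2 / (4 * s)) with hg_def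
  set h : ℝ → ℝ := fun s => Real.exp (‖M‖ ^ 2 / (2 * s)) with hh_def
  -- measurability of the exponential factors
  have mg : Measurable g := by
    apply Real.measurable_exp.comp
    exact measurable_const.div (measurable_id.const_mul 4)
  have mh : Measurable h := by
    apply Real.measurable_exp.comp
    exact measurable_const.div (measurable_id.const_mul 2)
  have mL : Measurable (fun s : ℝ => Real.exp (-‖x + M‖ ^ 2 / (2 * s))) := by
    apply Real.measurable_exp.comp
    exact measurable_const.div (measurable_id.const_mul 2)
  -- integrability of w
  have hw_int : IntegrableOn w (Ioi 0) := by
    have := hint 0 le_rfl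
    simpa [zero_div, Real.exp_zero, mul_one] using this
  -- integrability of w * h
  have hwh_int : IntegrableOn (fun s => w s * h s) (Ioi 0) := by
    have h0 := hint (‖M‖ ^ 2) (by positivity)
    have : (fun s => (2 * π * s) ^ (-(d : ℝ) / 2) * Real.exp (‖M‖ ^ 2 / (2 * s)) * η s)
        = fun s => w s * h s := by funext s; simp only [hw_def, hh_def]; ring
    rwa [this] at h0
  -- a.e. facts on Ioi 0
  have hae := ae_restrict_mem (μ := volume) (measurableSet_Ioi (a := (0:ℝ)))
  -- w is nonneg on Ioi 0
  have hw_nonneg : ∀ s ∈ Ioi (0:ℝ), 0 ≤ w s := by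
    intro s hs
    have : (0:ℝ) < 2 * π * s := by have := pi_pos; simp at hs; positivity
    exact mul_nonneg (rpow_nonneg this.le _) (hη_nonneg s)
  -- |g| ≤ 1 on Ioi 0
  have hg_le_one : ∀ s ∈ Ioi (0:ℝ), g s ≤ 1 := by
    intro s hs
    simp only [hg_def]
    rw [← Real.exp_zero]
    apply Real.exp_le_exp.2
    have hs' : (0:ℝ) < s := hs
    rw [neg_div]
    simp only [neg_nonpos]
    positivity
  have hg_pos : ∀ s : ℝ, 0 < g s := fun s => Real.exp_pos _
  have hh_pos : ∀ s : ℝ, 0 < h s := fun s => Real.exp_pos _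
  -- integrability of w * g
  have hwg_int : IntegrableOn (fun s => w s * g s) (Ioi 0) := by
    refine Integrable.mono' hw_int ?_ ?_
    · exact AEStronglyMeasurable.mul hw_int.aestronglyMeasurable mg.aestronglyMeasurable
    · filter_upwards [hae] with s hs
      rw [Real.norm_eq_abs, abs_mul, abs_of_nonneg (hw_nonneg s hs), abs_of_pos (hg_pos s)]
      calc w s * g s ≤ w s * 1 :=
            mul_le_mul_of_nonneg_left (hg_le_one s hs) (hw_nonneg s hs)
        _ = w s := mul_one _
  -- integrability of w * g * h
  have hwgh_int : IntegrableOn (fun s => w s * g s * h s) (Ioi 0) := by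
    refine Integrable.mono' hwh_int ?_ ?_
    · exact AEStronglyMeasurable.mul
        (AEStronglyMeasurable.mul hw_int.aestronglyMeasurable mg.aestronglyMeasurable)
        mh.aestronglyMeasurable
    · filter_upwards [hae] with s hs
      rw [Real.norm_eq_abs, abs_mul, abs_mul, abs_of_nonneg (hw_nonneg s hs),
        abs_of_pos (hg_pos s), abs_of_pos (hh_pos s)]
      calc w s * g s * h s ≤ w s * 1 * h s :=
            mul_le_mul_of_nonneg_right
              (mul_le_mul_of_nonneg_left (hg_le_one s hs) (hw_nonneg s hs)) (hh_pos s).le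
        _ = w s * h s := by ring
  -- integrability of the LHS integrand
  have hL_int : IntegrableOn (fun s => w s * Real.exp (-‖x + M‖ ^ 2 / (2 * s))) (Ioi 0) := by
    refine Integrable.mono' hwh_int ?_ ?_
    · exact AEStronglyMeasurable.mul hw_int.aestronglyMeasurable mL.aestronglyMeasurable
    · filter_upwards [hae] with s hs
      rw [Real.norm_eq_abs, abs_mul, abs_of_nonneg (hw_nonneg s hs),
        abs_of_pos (Real.exp_pos _)]
      apply mul_le_mul_of_nonneg_left _ (hw_nonneg s hs)
      simp only [hh_def]
      apply Real.exp_le_exp.2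
      have hs' : (0:ℝ) < s := hs
      have h1 : -‖x + M‖ ^ 2 / (2 * s) ≤ 0 := by
        rw [neg_div]; simp only [neg_nonpos]; positivity
      have h2 : (0:ℝ) ≤ ‖M‖ ^ 2 / (2 * s) := by positivity
      linarith
  -- rewrite statement integrals
  have e1 : (fun s => (2 * π * s) ^ (-(d : ℝ) / 2) * Real.exp (-‖x + M‖ ^ 2 / (2 * s)) * η s)
      = fun s => w s * Real.exp (-‖x + M‖ ^ 2 / (2 * s)) := by
    funext s; simp only [hw_def]; ring
  have e2 : (fun s => (2 * π * s) ^ (-(d : ℝ) / 2) * Real.exp (-‖x‖ ^ 2 / (4 * s)) * η s)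
      = fun s => w s * g s := by funext s; simp only [hw_def, hg_def]; ring
  have e3 : (fun s => (2 * π * s) ^ (-(d : ℝ) / 2) * Real.exp (‖M‖ ^ 2 / (2 * s)) * η s)
      = fun s => w s * h s := by funext s; simp only [hw_def, hh_def]; ring
  rw [e1, e2, e3]
  -- positivity of ∫ w
  have ha_pos : 0 < ∫ s in Ioi (0:ℝ), w s := by
    rcases lt_or_eq_of_le (integral_nonneg_of_ae
      (by filter_upwards [hae] with s hs; exact hw_nonneg s hs)) with hpos | heq
    · exact hpos
    · exfalso
      have hw0 : w =ᵐ[volume.restrict (Ioi (0:ℝ))] 0 :=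
        (integral_eq_zero_iff_of_nonneg_ae
          (by filter_upwards [hae] with s hs; exact hw_nonneg s hs) hw_int).1 heq.symm
      have hη0 : η =ᵐ[volume.restrict (Ioi (0:ℝ))] 0 := by
        filter_upwards [hw0, hae] with s hws hs
        have hpos : (0:ℝ) < 2 * π * s := by have := pi_pos; simp at hs; positivity
        have : (2 * π * s) ^ (-(d : ℝ) / 2) * η s = 0 := hws
        have hne : (2 * π * s) ^ (-(d : ℝ) / 2) ≠ 0 := (rpow_pos_of_pos hpos _).ne'
        simpa [hne] using this
      rw [integral_congr_ae hη0] at hη_prob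
      simp at hη_prob
  -- step 1 : pointwise bound of LHS integrand
  have step1 : ∫ s in Ioi (0:ℝ), w s * Real.exp (-‖x + M‖ ^ 2 / (2 * s))
      ≤ ∫ s in Ioi (0:ℝ), w s * g s * h s := by
    apply setIntegral_mono_on hL_int hwgh_int measurableSet_Ioi
    intro s hs
    have hs' : (0:ℝ) < s := hs
    have hnorm : ‖x‖ ^ 2 ≤ 2 * ‖x + M‖ ^ 2 + 2 * ‖M‖ ^ 2 := by
      have h1 : ‖x‖ ≤ ‖x + M‖ + ‖M‖ := by
        calc ‖x‖ = ‖x + M + -M‖ := by simp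
          _ ≤ ‖x + M‖ + ‖-M‖ := norm_add_le _ _
          _ = ‖x + M‖ + ‖M‖ := by rw [norm_neg]
      have h2 := pow_le_pow_left₀ (norm_nonneg x) h1 2
      nlinarith [sq_nonneg (‖x + M‖ - ‖M‖), h2]
    have harg : -‖x + M‖ ^ 2 / (2 * s) ≤ -‖x‖ ^ 2 / (4 * s) + ‖M‖ ^ 2 / (2 * s) := by
      rw [div_add_div _ _ (by positivity : (4:ℝ) * s ≠ 0) (by positivity : (2:ℝ) * s ≠ 0),
        div_le_div_iff₀ (by positivity) (by positivity)]
      nlinarith [sq_nonneg s]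
    have hexp : Real.exp (-‖x + M‖ ^ 2 / (2 * s)) ≤ g s * h s := by
      simp only [hg_def, hh_def]
      rw [← Real.exp_add]
      exact Real.exp_le_exp.2 harg
    calc w s * Real.exp (-‖x + M‖ ^ 2 / (2 * s)) ≤ w s * (g s * h s) :=
          mul_le_mul_of_nonneg_left hexp (hw_nonneg s hs)
      _ = w s * g s * h s := by ring
  -- step 2 : FKG / Chebyshev
  have step2 : (∫ s in Ioi (0:ℝ), w s * g s * h s) * (∫ s in Ioi (0:ℝ), w s)
      ≤ (∫ s in Ioi (0:ℝ), w s * g s) * (∫ s in Ioi (0:ℝ), w s * h s) := by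
    apply cheb_aux (volume.restrict (Ioi (0:ℝ))) w g h hw_int hwg_int hwh_int hwgh_int
    rw [Measure.prod_restrict]
    filter_upwards [ae_restrict_mem (measurableSet_Ioi.prod measurableSet_Ioi)] with p hp
    obtain ⟨hp1, hp2⟩ := hp
    have hp1' : (0:ℝ) < p.1 := hp1
    have hp2' : (0:ℝ) < p.2 := hp2
    have gmono : ∀ s t : ℝ, 0 < s → s ≤ t → g s ≤ g t := by
      intro s t hs hst
      apply Real.exp_le_exp.2
      rw [neg_div, neg_div, neg_le_neg_iff]
      gcongr
      all_goals first | positivity | linarith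
    have hanti : ∀ s t : ℝ, 0 < s → s ≤ t → h t ≤ h s := by
      intro s t hs hst
      apply Real.exp_le_exp.2
      gcongr
      all_goals first | positivity | linarith
    have key : (g p.1 - g p.2) * (h p.1 - h p.2) ≤ 0 := by
      rcases le_total p.1 p.2 with hle | hle
      · have h1 := gmono p.1 p.2 hp1' hle
        have h2 := hanti p.1 p.2 hp1' hle
        nlinarith
      · have h1 := gmono p.2 p.1 hp2' hle
        have h2 := hanti p.2 p.1 hp2' hle
        nlinarith
    have hww : 0 ≤ w p.1 * w p.2 :=
      mul_nonneg (hw_nonneg p.1 hp1) (hw_nonneg p.2 hp2)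
    nlinarith [mul_nonpos_of_nonneg_of_nonpos hww key]
  have final : ∫ s in Ioi (0:ℝ), w s * g s * h s
      ≤ (∫ s in Ioi (0:ℝ), w s * g s) * (∫ s in Ioi (0:ℝ), w s * h s)
        / (∫ s in Ioi (0:ℝ), w s) := (le_div_iff₀ ha_pos).2 step2
  exact step1.trans final
end
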